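/- arXiv:1805.09211 — 2 statements merged into one kernel-verified Lean document; each statement's English description precedes it below -/
import Mathlib

section
/- Let d = 4m for a positive integer m, and let S = {(0, 2i−1) : i = 1, …, d/4} ∪ {(0,0), (d/2, 0), (d/2, d/2 + 1)} ⊆ ℤ/dℤ × ℤ/dℤ, a set of 3 + d/4 pairs. Then there is no unit vector α ∈ ℂ^d such that the vectors X^a Z^b α for (a,b) ∈ S are pairwise orthogonal; that is, this set of 3 + d/4 generalized Bell states in d⊗d is 1-LOCC indistinguishable, and hence f_GBS(d) ≤ 3 + d/4. -/
open Complex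

/-- `ω d = exp(2πi/d)`, the primitive `d`-th root of unity in `ℂ`. -/
noncomputable def ω (d : ℕ) : ℂ := Complex.exp (2 * Real.pi * Complex.I / d)

/-- The generalized Pauli operator `U_{m,n} = X^m Z^n` acting on `ℂ^d`
(coordinates indexed by `ZMod d`), where `X e_j = e_{j+1}` and `Z e_j = ω^j e_j`:
`(U_{m,n} α)_k = ω^{n (k-m)} α_{k-m}`. -/
noncomputable def pU (d : ℕ) [NeZero d] (m n : ZMod d) (α : ZMod d → ℂ) : ZMod d → ℂ :=
  fun k => ω d ^ (n.val * (k - m).val) * α (k - m)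

/-- The standard Hermitian inner product on `ℂ^d`. -/
noncomputable def ip (d : ℕ) [NeZero d] (α β : ZMod d → ℂ) : ℂ :=
  ∑ j : ZMod d, (starRingEnd ℂ) (α j) * β j

open ZMod Finset

/-!
Write `h = d / 2` and `F_a j = conj (α (j - a)) * α j`. Up to a phase, the inner product of
`X^a Z^b α` with `Z^b' α` is the discrete Fourier coefficient of `F_a` at `b - b'`.
Orthogonality of `(0, 0)` to the `(0, 2i - 1)` kills the coefficients of `F_0 = |α|²` at the odd
frequencies below `h`, hence (`F_0` being real) at all `k` with `(-1)^k = -1`; so `|α|²` is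
`h`-periodic. Orthogonality of `(h, 0)` and `(h, h + 1)` to `(0, 0)` and the `(0, 2i - 1)` kills
the coefficients of `F_h` at `0`, at the odd frequencies and at `h + 2 - 2i`, which together with
the symmetry `F_h (j + h) = conj (F_h j)` is every frequency; so `F_h = 0`. Then
`|α j|² = |α j| |α (j + h)| = |F_h (j + h)| = 0` for all `j`.
-/

section Fourier

variable {N : ℕ}

noncomputable def shiftProd (α : ZMod N → ℂ) (a j : ZMod N) : ℂ :=
  starRingEnd ℂ (α (j - a)) * α j

lemma shiftProd_add_self {a : ZMod N} (ha : a + a = 0) (α : ZMod N → ℂ) (j : ZMod N) :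
    shiftProd α a (j + a) = starRingEnd ℂ (shiftProd α a j) := by
  have hj : j + a = j - a := by linear_combination ha
  rw [shiftProd, shiftProd, add_sub_cancel_right, map_mul, Complex.conj_conj, hj, mul_comm]

lemma eq_zero_of_shiftProd_eq_zero {α : ZMod N → ℂ} {h : ZMod N}
    (hperiod : ∀ j, shiftProd α 0 (j + h) = shiftProd α 0 j) (hcorr : ∀ j, shiftProd α h j = 0) :
    α = 0 := by
  funext j
  have hj := hcorr (j + h)
  have hj' := hperiod j
  simp only [shiftProd, sub_zero, add_sub_cancel_right] at hj hj'
  rcases mul_eq_zero.mp hj with hα | hα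
  · simpa using hα
  · rw [hα, mul_zero] at hj'
    simpa using hj'.symm

variable [NeZero N]

lemma stdAddChar_ne_zero (x : ZMod N) : stdAddChar x ≠ 0 := by
  rw [stdAddChar_apply]
  exact Circle.coe_ne_zero _

lemma ω_pow_eq_stdAddChar (n : ℕ) : ω N ^ n = stdAddChar (n : ZMod N) := by
  have h := stdAddChar_coe (N := N) n
  push_cast at h
  rw [h, ω, ← Complex.exp_nat_mul]
  ring_nf

lemma pU_apply (a b : ZMod N) (α : ZMod N → ℂ) (k : ZMod N) :
    pU N a b α k = stdAddChar (b * (k - a)) * α (k - a) := by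
  rw [pU, ω_pow_eq_stdAddChar, Nat.cast_mul, natCast_zmod_val, natCast_zmod_val]

lemma ip_pU_pU_zero (a b b' : ZMod N) (α : ZMod N → ℂ) :
    ip N (pU N a b α) (pU N 0 b' α) = stdAddChar (a * b) * 𝓕 (shiftProd α a) (b - b') := by
  rw [ip, dft_apply, mul_sum]
  refine sum_congr rfl fun j _ => ?_
  have hchar : stdAddChar (-(b * (j - a))) * stdAddChar (b' * j)
      = stdAddChar (a * b) * stdAddChar (-(j * (b - b'))) (N := N) := by
    rw [← AddChar.map_add_eq_mul, ← AddChar.map_add_eq_mul]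
    ring_nf
  rw [pU_apply, pU_apply, map_mul, ← AddChar.map_neg_eq_conj, sub_zero, smul_eq_mul, shiftProd]
  linear_combination (starRingEnd ℂ (α (j - a)) * α j) * hchar

lemma dft_shiftProd_eq_zero_of_ip_eq_zero {a b b' : ZMod N} {α : ZMod N → ℂ}
    (horth : ip N (pU N a b α) (pU N 0 b' α) = 0) : 𝓕 (shiftProd α a) (b - b') = 0 := by
  rw [ip_pU_pU_zero] at horth
  exact (mul_eq_zero.mp horth).resolve_left (stdAddChar_ne_zero _)

lemma dft_neg_eq_zero_of_apply_add_eq_conj {Φ : ZMod N → ℂ} {a : ZMod N}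
    (hΦ : ∀ j, Φ (j + a) = starRingEnd ℂ (Φ j)) {k : ZMod N} (hk : 𝓕 Φ k = 0) : 𝓕 Φ (-k) = 0 := by
  have hconj : starRingEnd ℂ (𝓕 Φ k) = stdAddChar (-(a * k)) * 𝓕 Φ (-k) := by
    rw [dft_apply, dft_apply, map_sum, mul_sum]
    refine Fintype.sum_equiv (Equiv.addRight a) _ _ fun j => ?_
    rw [Equiv.coe_addRight, smul_eq_mul, smul_eq_mul, map_mul, ← AddChar.map_neg_eq_conj, ← hΦ,
      ← mul_assoc, ← AddChar.map_add_eq_mul]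
    ring_nf
  rw [hk, map_zero, eq_comm, mul_eq_zero] at hconj
  exact hconj.resolve_left (stdAddChar_ne_zero _)

lemma dft_comp_add_right (Φ : ZMod N → ℂ) (h k : ZMod N) :
    𝓕 (fun j => Φ (j + h)) k = stdAddChar (h * k) * 𝓕 Φ k := by
  rw [dft_apply, dft_apply, mul_sum]
  refine Fintype.sum_equiv (Equiv.addRight h) _ _ fun j => ?_
  rw [Equiv.coe_addRight, smul_eq_mul, smul_eq_mul, ← mul_assoc, ← AddChar.map_add_eq_mul]
  ring_nf

lemma apply_add_eq_of_dft_eq_zero {Φ : ZMod N → ℂ} {h : ZMod N}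
    (hΦ : ∀ k, stdAddChar (h * k) ≠ 1 → 𝓕 Φ k = 0) (j : ZMod N) : Φ (j + h) = Φ j := by
  suffices 𝓕 (fun i => Φ (i + h)) = 𝓕 Φ from congrFun (dft.injective this) j
  funext k
  rw [dft_comp_add_right]
  by_cases hk : stdAddChar (h * k) = 1
  · rw [hk, one_mul]
  · rw [hΦ k hk, mul_zero]

lemma exists_natCast_le_half (k : ZMod N) : ∃ n ≤ N / 2, k = n ∨ k = -n := by
  refine ⟨k.valMinAbs.natAbs, natAbs_valMinAbs_le k, ?_⟩
  have hk := coe_valMinAbs k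
  rcases Int.natAbs_eq k.valMinAbs with h | h <;>
    rw [h] at hk <;> simp only [Int.cast_neg, Int.cast_natCast] at hk
  exacts [.inl hk.symm, .inr hk.symm]

end Fourier

section FourDivides

variable {d : ℕ} {Ψ : ZMod d → ℂ}

lemma natCast_half_add_self (hd : 2 ∣ d) :
    ((d / 2 : ℕ) : ZMod d) + ((d / 2 : ℕ) : ZMod d) = 0 := by
  rw [← Nat.cast_add, show d / 2 + d / 2 = d by omega, natCast_self]

lemma natCast_ne_zero_of_lt {n : ℕ} (hn0 : 0 < n) (hn : n < d) : (n : ZMod d) ≠ 0 := by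
  rw [Ne, natCast_eq_zero_iff]
  exact fun hdvd => absurd (Nat.le_of_dvd hn0 hdvd) (by omega)

lemma apply_natCast_eq_zero_of_odd (hd : 4 ∣ d)
    (hodd : ∀ i ∈ Icc 1 (d / 4), Ψ ((2 * i - 1 : ℕ) : ZMod d) = 0)
    {n : ℕ} (hn : n ≤ d / 2) (hn_odd : Odd n) : Ψ n = 0 := by
  obtain ⟨t, rfl⟩ := hn_odd
  have h := hodd (t + 1) (mem_Icc.mpr ⟨by omega, by omega⟩)
  rwa [show 2 * (t + 1) - 1 = 2 * t + 1 by omega] at h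

lemma apply_eq_zero_of_odd [NeZero d] (hd : 4 ∣ d) (hneg : ∀ k, Ψ k = 0 → Ψ (-k) = 0)
    (hodd : ∀ i ∈ Icc 1 (d / 4), Ψ ((2 * i - 1 : ℕ) : ZMod d) = 0) {k : ZMod d}
    (hk : stdAddChar (((d / 2 : ℕ) : ZMod d) * k) ≠ 1) : Ψ k = 0 := by
  -- `stdAddChar (d / 2 * k) = (-1) ^ k`, so `hk` says that `k` is odd.
  obtain ⟨n, hn, hkn⟩ := exists_natCast_le_half k
  suffices Ψ n = 0 by rcases hkn with rfl | rfl; exacts [this, hneg _ this]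
  refine apply_natCast_eq_zero_of_odd hd hodd hn (Nat.not_even_iff_odd.mp fun ⟨t, ht⟩ => hk ?_)
  have hhalf : ((d / 2 : ℕ) : ZMod d) * n = 0 := by
    rw [ht, Nat.cast_add]
    linear_combination (t : ZMod d) * natCast_half_add_self (dvd_trans (by norm_num) hd)
  rcases hkn with rfl | rfl
  · rw [hhalf, AddChar.map_zero_eq_one]
  · rw [mul_neg, hhalf, neg_zero, AddChar.map_zero_eq_one]

lemma apply_eq_zero_of_odd_of_even [NeZero d] (hd : 4 ∣ d) (hneg : ∀ k, Ψ k = 0 → Ψ (-k) = 0)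
    (hodd : ∀ i ∈ Icc 1 (d / 4), Ψ ((2 * i - 1 : ℕ) : ZMod d) = 0) (hzero : Ψ 0 = 0)
    (heven : ∀ i ∈ Icc 1 (d / 4),
      Ψ (((d / 2 + 1 : ℕ) : ZMod d) - ((2 * i - 1 : ℕ) : ZMod d)) = 0)
    (k : ZMod d) : Ψ k = 0 := by
  obtain ⟨n, hn, hkn⟩ := exists_natCast_le_half k
  suffices Ψ n = 0 by rcases hkn with rfl | rfl; exacts [this, hneg _ this]
  rcases Nat.even_or_odd n with ⟨t, rfl⟩ | hn_odd
  · rcases t.eq_zero_or_pos with rfl | ht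
    · simpa using hzero
    · have h := heven (d / 4 + 1 - t) (mem_Icc.mpr ⟨by omega, by omega⟩)
      rwa [← Nat.cast_sub (by omega), show d / 2 + 1 - (2 * (d / 4 + 1 - t) - 1) = t + t by omega]
        at h
  · exact apply_natCast_eq_zero_of_odd hd hodd hn hn_odd

end FourDivides

def oddLabels (d : ℕ) : Finset (ZMod d × ZMod d) :=
  (Icc 1 (d / 4)).image fun i : ℕ => ((0 : ZMod d), ((2 * i - 1 : ℕ) : ZMod d))

def extraLabels (d : ℕ) : Finset (ZMod d × ZMod d) :=
  {(0, 0), (((d / 2 : ℕ) : ZMod d), 0), (((d / 2 : ℕ) : ZMod d), ((d / 2 + 1 : ℕ) : ZMod d))}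

section Labels

variable {d : ℕ}

lemma disjoint_oddLabels_extraLabels : Disjoint (oddLabels d) (extraLabels d) := by
  rw [disjoint_left]
  rintro _ hodd hextra
  obtain ⟨i, hi, rfl⟩ := mem_image.mp hodd
  rw [mem_Icc] at hi
  simp only [extraLabels, mem_insert, mem_singleton, Prod.mk.injEq] at hextra
  rcases hextra with ⟨-, h⟩ | ⟨h, -⟩ | ⟨h, -⟩
  · exact natCast_ne_zero_of_lt (by omega) (by omega) h
  all_goals exact natCast_ne_zero_of_lt (by omega) (by omega) h.symm

lemma card_oddLabels : (oddLabels d).card = d / 4 := by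
  rw [oddLabels, card_image_of_injOn, Nat.card_Icc, Nat.add_sub_cancel]
  intro i hi j hj hij
  simp only [coe_Icc, Set.mem_Icc] at hi hj
  have h := congrArg ZMod.val (Prod.ext_iff.mp hij).2
  rw [val_cast_of_lt (by omega), val_cast_of_lt (by omega)] at h
  omega

lemma card_extraLabels [NeZero d] (hd : 4 ∣ d) : (extraLabels d).card = 3 := by
  have hd0 := NeZero.ne d
  have hhalf : ((d / 2 : ℕ) : ZMod d) ≠ 0 := natCast_ne_zero_of_lt (by omega) (by omega)
  have hhalf1 : ((d / 2 : ℕ) : ZMod d) + 1 ≠ 0 := by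
    exact_mod_cast natCast_ne_zero_of_lt (n := d / 2 + 1) (by omega) (by omega)
  rw [extraLabels, card_insert_of_notMem, card_insert_of_notMem, card_singleton] <;>
    simp [Ne.symm hhalf, Ne.symm hhalf1]

lemma card_oddLabels_union_extraLabels [NeZero d] (hd : 4 ∣ d) :
    (oddLabels d ∪ extraLabels d).card = 3 + d / 4 := by
  rw [card_union_of_disjoint disjoint_oddLabels_extraLabels, card_oddLabels,
    card_extraLabels hd, add_comm]

end Labels

def PairwiseOrthogonalOn {d : ℕ} [NeZero d] (S : Finset (ZMod d × ZMod d)) (α : ZMod d → ℂ) :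
    Prop :=
  ∀ p ∈ S, ∀ q ∈ S, p ≠ q → ip d (pU d p.1 p.2 α) (pU d q.1 q.2 α) = 0

section Orthogonal

variable {d : ℕ} [NeZero d] {α : ZMod d → ℂ}

lemma dft_shiftProd_eq_zero_of_mem_extraLabels
    (horth : PairwiseOrthogonalOn (oddLabels d ∪ extraLabels d) α) {a b : ZMod d}
    (hab : (a, b) ∈ extraLabels d) {i : ℕ} (hi : i ∈ Icc 1 (d / 4)) :
    𝓕 (shiftProd α a) (b - ((2 * i - 1 : ℕ) : ZMod d)) = 0 :=
  have hi' := mem_image_of_mem (fun i : ℕ => ((0 : ZMod d), ((2 * i - 1 : ℕ) : ZMod d))) hi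
  dft_shiftProd_eq_zero_of_ip_eq_zero <|
    horth (a, b) (mem_union_right _ hab) (0, _) (mem_union_left _ hi')
    (disjoint_iff_ne.mp disjoint_oddLabels_extraLabels _ hi' _ hab).symm

lemma shiftProd_zero_add_half (hd : 4 ∣ d)
    (horth : PairwiseOrthogonalOn (oddLabels d ∪ extraLabels d) α) (j : ZMod d) :
    shiftProd α 0 (j + ((d / 2 : ℕ) : ZMod d)) = shiftProd α 0 j := by
  have hneg : ∀ k, 𝓕 (shiftProd α 0) k = 0 → 𝓕 (shiftProd α 0) (-k) = 0 := fun _ =>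
    dft_neg_eq_zero_of_apply_add_eq_conj (shiftProd_add_self (add_zero 0) α)
  refine apply_add_eq_of_dft_eq_zero (fun k => apply_eq_zero_of_odd hd hneg fun i hi => ?_) j
  simpa using hneg _ (dft_shiftProd_eq_zero_of_mem_extraLabels horth (mem_insert_self _ _) hi)

lemma shiftProd_half_eq_zero (hd : 4 ∣ d)
    (horth : PairwiseOrthogonalOn (oddLabels d ∪ extraLabels d) α) :
    shiftProd α ((d / 2 : ℕ) : ZMod d) = 0 := by
  have hd0 := NeZero.ne d
  set h : ZMod d := ((d / 2 : ℕ) : ZMod d)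
  have hh : h + h = 0 := natCast_half_add_self (dvd_trans (by norm_num) hd)
  have hh0 : h ≠ 0 := natCast_ne_zero_of_lt (by omega) (by omega)
  have hneg : ∀ k, 𝓕 (shiftProd α h) k = 0 → 𝓕 (shiftProd α h) (-k) = 0 := fun _ =>
    dft_neg_eq_zero_of_apply_add_eq_conj (shiftProd_add_self hh α)
  have hmem₀ : ((0 : ZMod d), (0 : ZMod d)) ∈ extraLabels d := mem_insert_self _ _
  have hmem₁ : (h, (0 : ZMod d)) ∈ extraLabels d := mem_insert_of_mem (mem_insert_self _ _)
  have hmem₂ : (h, ((d / 2 + 1 : ℕ) : ZMod d)) ∈ extraLabels d :=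
    mem_insert_of_mem (mem_insert_of_mem (mem_singleton_self _))
  refine dft.map_eq_zero_iff.mp (funext (apply_eq_zero_of_odd_of_even hd hneg (fun i hi => ?_) ?_
    (fun i hi => dft_shiftProd_eq_zero_of_mem_extraLabels horth hmem₂ hi)))
  · simpa using hneg _ (dft_shiftProd_eq_zero_of_mem_extraLabels horth hmem₁ hi)
  · simpa using dft_shiftProd_eq_zero_of_ip_eq_zero (horth _ (mem_union_right _ hmem₁)
      (0, 0) (mem_union_right _ hmem₀) (by simp [hh0]))

end Orthogonal

theorem stmt_15_general (m : ℕ) (d : ℕ) [NeZero d] (hd : d = 4 * m) :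
    ∃ S : Finset (ZMod d × ZMod d),
      S = (Finset.Icc 1 (d / 4)).image
              (fun i : ℕ => ((0 : ZMod d), ((2 * i - 1 : ℕ) : ZMod d))) ∪
            ({((0 : ZMod d), (0 : ZMod d)),
              ((((d / 2 : ℕ) : ZMod d)), (0 : ZMod d)),
              ((((d / 2 : ℕ) : ZMod d)), (((d / 2 + 1 : ℕ) : ZMod d)))} :
              Finset (ZMod d × ZMod d)) ∧
      S.card = 3 + d / 4 ∧
      ¬ ∃ α : ZMod d → ℂ, ip d α α = 1 ∧
        ∀ p ∈ S, ∀ q ∈ S, p ≠ q → ip d (pU d p.1 p.2 α) (pU d q.1 q.2 α) = 0 := by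
  have hd4 : 4 ∣ d := ⟨m, hd⟩
  refine ⟨oddLabels d ∪ extraLabels d, rfl, card_oddLabels_union_extraLabels hd4, ?_⟩
  rintro ⟨α, hα, horth⟩
  rw [eq_zero_of_shiftProd_eq_zero (shiftProd_zero_add_half hd4 horth)
    (congrFun (shiftProd_half_eq_zero hd4 horth))] at hα
  simp [ip] at hα

/-- (Theorem 4(1) of the paper.) For `d = 4m` (`m ≥ 1`), the set
`S = {(0, 2i-1) : i = 1,…,d/4} ∪ {(0,0), (d/2,0), (d/2, d/2+1)}` of `3 + d/4`
generalized Bell states is 1-LOCC indistinguishable: there is no unit vector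
`α ∈ ℂ^d` for which the vectors `X^a Z^b α`, `(a,b) ∈ S`, are pairwise
orthogonal. Hence `f_GBS(d) ≤ 3 + d/4`. -/
theorem stmt_15 (m : ℕ) (hm : 1 ≤ m) (d : ℕ) [NeZero d] (hd : d = 4 * m) :
    ∃ S : Finset (ZMod d × ZMod d),
      S = (Finset.Icc 1 (d / 4)).image
              (fun i : ℕ => ((0 : ZMod d), ((2 * i - 1 : ℕ) : ZMod d))) ∪
            ({((0 : ZMod d), (0 : ZMod d)),
              ((((d / 2 : ℕ) : ZMod d)), (0 : ZMod d)),
              ((((d / 2 : ℕ) : ZMod d)), (((d / 2 + 1 : ℕ) : ZMod d)))} :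
              Finset (ZMod d × ZMod d)) ∧
      S.card = 3 + d / 4 ∧
      ¬ ∃ α : ZMod d → ℂ, ip d α α = 1 ∧
        ∀ p ∈ S, ∀ q ∈ S, p ≠ q → ip d (pU d p.1 p.2 α) (pU d q.1 q.2 α) = 0 :=
  stmt_15_general m d hd
end

section
/- Let d ≥ 6 be even and let m ≥ 1 be an integer. Define S^d(m) = {(0, i) : 0 ≤ i ≤ m−1} ∪ {(d/2, (im−1) mod d) : 1 ≤ i ≤ ⌈(d+2)/(2m)⌉} ∪ {(0, (d/2 − im) mod d) : 0 ≤ i ≤ ⌈⌈(d+1)/4⌉/m⌉ − 1} ⊆ ℤ/dℤ × ℤ/dℤ. Then there is no unit vector α ∈ ℂ^d such that the vectors X^a Z^b α for (a,b) ∈ S^d(m) are pairwise orthogonal; that is, the set of generalized Bell states {U_{a,b} : (a,b) ∈ S^d(m)} is 1-LOCC indistinguishable. -/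
open Complex Polynomial Finset

lemma omega_prim (d : ℕ) [NeZero d] : IsPrimitiveRoot (ω d) d := by
  simpa [ω] using Complex.isPrimitiveRoot_exp d (NeZero.ne d)

lemma omega_ne_zero (d : ℕ) [NeZero d] : ω d ≠ 0 := Complex.exp_ne_zero _

lemma omega_pow_d (d : ℕ) [NeZero d] : ω d ^ (d:ℤ) = 1 := by
  rw [zpow_natCast]; exact (omega_prim d).pow_eq_one

lemma omega_zpow_congr (d : ℕ) [NeZero d] {a b : ℤ} (h : (d:ℤ) ∣ a - b) :
    ω d ^ a = ω d ^ b := by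
  obtain ⟨c, hc⟩ := h
  have ha : a = b + d * c := by linarith
  rw [ha, zpow_add₀ (omega_ne_zero d), zpow_mul, omega_pow_d, one_zpow, mul_one]

lemma omega_zpow_eq_one_iff (d : ℕ) [NeZero d] (l : ℤ) : ω d ^ l = 1 ↔ (d:ℤ) ∣ l :=
  (omega_prim d).zpow_eq_one_iff_dvd l

lemma omega_conj (d : ℕ) [NeZero d] {a : ℤ} :
    (starRingEnd ℂ) (ω d ^ a) = ω d ^ (-a) := by
  have hconj : (starRingEnd ℂ) (ω d) = (ω d)⁻¹ := by
    rw [ω, ← Complex.exp_conj, ← Complex.exp_neg]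
    congr 1
    simp only [map_div₀, map_mul, Complex.conj_I, Complex.conj_ofReal, map_ofNat, map_natCast]
    ring
  rw [map_zpow₀, hconj, inv_zpow, ← zpow_neg]

lemma geom_ortho (d : ℕ) [NeZero d] (j k : ZMod d) :
    ∑ t ∈ Finset.range d, (ω d ^ ((j.val : ℤ) - (k.val : ℤ))) ^ t
      = if j = k then (d : ℂ) else 0 := by
  by_cases h : j = k
  · simp [h]
  · rw [if_neg h]
    have hx1 : ω d ^ ((j.val : ℤ) - (k.val : ℤ)) ≠ 1 := by
      intro hx
      have hdvd := (omega_zpow_eq_one_iff d _).mp hx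
      have hj : j.val < d := ZMod.val_lt j
      have hk : k.val < d := ZMod.val_lt k
      have : (j.val : ℤ) - k.val = 0 := by
        refine Int.eq_zero_of_abs_lt_dvd hdvd ?_
        rw [abs_lt]; omega
      have : j.val = k.val := by omega
      exact h (ZMod.val_injective d this)
    rw [geom_sum_eq hx1]
    have : (ω d ^ ((j.val : ℤ) - (k.val : ℤ))) ^ d = 1 := by
      rw [← zpow_natCast, ← zpow_mul, mul_comm, zpow_mul, omega_pow_d, one_zpow]
    rw [this, sub_self, zero_div]

lemma inv_core (d : ℕ) [NeZero d] (c : ZMod d → ℂ) (k : ZMod d) :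
    ∑ t ∈ Finset.range d, ω d ^ (-((t : ℤ) * (k.val : ℤ))) *
      ∑ j : ZMod d, ω d ^ ((t : ℤ) * (j.val : ℤ)) * c j = (d : ℂ) * c k := by
  have step : ∀ t ∈ Finset.range d,
      ω d ^ (-((t : ℤ) * (k.val : ℤ))) * ∑ j : ZMod d, ω d ^ ((t : ℤ) * (j.val : ℤ)) * c j
      = ∑ j : ZMod d, (ω d ^ ((j.val : ℤ) - (k.val : ℤ))) ^ t * c j := by
    intro t _
    rw [Finset.mul_sum]
    refine Finset.sum_congr rfl fun j _ => ?_
    rw [← mul_assoc, ← zpow_add₀ (omega_ne_zero d), ← zpow_natCast (ω d ^ _), ← zpow_mul]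
    congr 2
    ring
  rw [Finset.sum_congr rfl step, Finset.sum_comm]
  have : ∀ j : ZMod d, ∑ t ∈ Finset.range d, (ω d ^ ((j.val : ℤ) - (k.val : ℤ))) ^ t * c j
      = (if j = k then (d:ℂ) else 0) * c j := by
    intro j; rw [← Finset.sum_mul, geom_ortho]
  rw [Finset.sum_congr rfl fun j _ => this j]
  rw [Finset.sum_eq_single k]
  · simp
  · intro b _ hb; simp [hb]
  · intro h; exact absurd (Finset.mem_univ k) h

lemma omega_zpow_inj (d : ℕ) [NeZero d] {a b : ℤ} (h : ω d ^ a = ω d ^ b) :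
    (d : ℤ) ∣ a - b := by
  have : ω d ^ (a - b) = 1 := by
    rw [zpow_sub₀ (omega_ne_zero d), h, div_self (zpow_ne_zero _ (omega_ne_zero d))]
  exact (omega_zpow_eq_one_iff d _).mp this

lemma omega_half (d : ℕ) [NeZero d] (heven : d % 2 = 0) (hd2 : 2 ≤ d) :
    ω d ^ ((d / 2 : ℕ) : ℤ) = -1 := by
  have hmul : ω d ^ ((d / 2 : ℕ) : ℤ) * ω d ^ ((d / 2 : ℕ) : ℤ) = 1 := by
    rw [← zpow_add₀ (omega_ne_zero d)]
    have : ((d / 2 : ℕ) : ℤ) + ((d / 2 : ℕ) : ℤ) = (d : ℤ) := by omega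
    rw [this, omega_pow_d]
  rcases mul_self_eq_one_iff.mp hmul with h1 | h1
  · exfalso
    have := (omega_zpow_eq_one_iff d _).mp h1
    have := Int.le_of_dvd (by omega) this
    omega
  · exact h1

lemma core (d : ℕ) [NeZero d] (hd6 : 6 ≤ d) (heven : d % 2 = 0) (β : ZMod d → ℂ)
    (hβconj : ∀ k, (starRingEnd ℂ) (β k) = β k)
    (hβsum : ∑ k : ZMod d, β k = 1)
    (hβprod : ∀ k : ZMod d, β k * β (k + ((d / 2 : ℕ) : ZMod d)) = 0)
    (D : ℕ) (hD : 4 * D < d)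
    (hf : ∀ r : ℕ, D + 1 ≤ r → r ≤ d / 2 →
      ∑ k : ZMod d, ω d ^ ((r : ℤ) * (k.val : ℤ)) * β k = 0) : False := by
  set f : ℤ → ℂ := fun t => ∑ k : ZMod d, ω d ^ (t * (k.val : ℤ)) * β k with hfdef
  have hper : ∀ a b : ℤ, (d : ℤ) ∣ a - b → f a = f b := by
    intro a b hab
    refine Finset.sum_congr rfl fun k _ => ?_
    rw [omega_zpow_congr d (by rw [← sub_mul]; exact Dvd.dvd.mul_right hab _)]
  have hconjf : ∀ t : ℤ, (starRingEnd ℂ) (f t) = f (-t) := by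
    intro t
    rw [map_sum]
    refine Finset.sum_congr rfl fun k _ => ?_
    rw [map_mul, omega_conj, hβconj, neg_mul]
  have hf' : ∀ r : ℕ, D + 1 ≤ r → r ≤ d / 2 → f ((r : ℤ)) = 0 := fun r h1 h2 => hf r h1 h2
  have hbig : ∀ u : ℤ, (D : ℤ) + 1 ≤ u → u ≤ (d : ℤ) - D - 1 → f u = 0 := by
    intro u h1 h2
    by_cases hu : u ≤ ((d / 2 : ℕ) : ℤ)
    · have : u = ((u.toNat : ℕ) : ℤ) := by omega
      rw [this]
      exact hf' u.toNat (by omega) (by omega)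
    · have hdu : f ((d : ℤ) - u) = 0 := by
        have : (d : ℤ) - u = (((d : ℤ) - u).toNat : ℤ) := by omega
        rw [this]
        exact hf' _ (by omega) (by omega)
      have : f u = (starRingEnd ℂ) (f ((d:ℤ) - u)) := by
        rw [hconjf, neg_sub]
        exact (hper u (u - d) (by ring_nf; exact ⟨1, by ring⟩)).symm ▸ hper u (u - d) ⟨1, by ring⟩
      rw [this, hdu, map_zero]
  set P : Polynomial ℂ :=
    ∑ t ∈ Finset.range (2 * D + 1), Polynomial.C (f ((t : ℤ) - D)) * Polynomial.X ^ t with hPdef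
  have hcoeff : P.coeff D = 1 := by
    rw [hPdef, Polynomial.finset_sum_coeff]
    have : ∀ t ∈ Finset.range (2 * D + 1),
        (Polynomial.C (f ((t : ℤ) - D)) * Polynomial.X ^ t).coeff D
        = if D = t then f ((t : ℤ) - D) else 0 := by
      intro t _
      rw [Polynomial.coeff_C_mul, Polynomial.coeff_X_pow]
      split <;> simp
    rw [Finset.sum_congr rfl this, Finset.sum_ite_eq (Finset.range (2 * D + 1)) D]
    rw [if_pos (Finset.mem_range.mpr (by omega))]
    simp only [sub_self]
    have : f 0 = ∑ k : ZMod d, β k := by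
      refine Finset.sum_congr rfl fun k _ => ?_
      rw [zero_mul, zpow_zero, one_mul]
    rw [this, hβsum]
  have hdegP : P.natDegree ≤ 2 * D := by
    refine Polynomial.natDegree_sum_le_of_forall_le _ _ fun t ht => ?_
    refine le_trans (Polynomial.natDegree_C_mul_le _ _) ?_
    rw [Polynomial.natDegree_X_pow]
    exact Nat.lt_succ_iff.mp (Finset.mem_range.mp ht)
  have heval : ∀ k : ZMod d, P.eval (ω d ^ (-(k.val : ℤ)))
      = ω d ^ (-((D : ℤ) * (k.val : ℤ))) * ((d : ℂ) * β k) := by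
    intro k
    have e1 : P.eval (ω d ^ (-(k.val : ℤ)))
        = ∑ t ∈ Finset.range (2 * D + 1), f ((t : ℤ) - D) * ω d ^ (-((t : ℤ) * (k.val : ℤ))) := by
      rw [hPdef, Polynomial.eval_finset_sum]
      refine Finset.sum_congr rfl fun t _ => ?_
      rw [Polynomial.eval_mul, Polynomial.eval_C, Polynomial.eval_pow, Polynomial.eval_X,
        ← zpow_natCast (ω d ^ (-(k.val : ℤ))), ← zpow_mul]
      congr 2
      ring
    have e2 : ∑ t ∈ Finset.range (2 * D + 1), f ((t : ℤ) - D) * ω d ^ (-((t : ℤ) * (k.val : ℤ)))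
        = ∑ t ∈ Finset.range d, f ((t : ℤ) - D) * ω d ^ (-((t : ℤ) * (k.val : ℤ))) := by
      refine Finset.sum_subset ?_ ?_
      · intro x hx
        rw [Finset.mem_range] at hx ⊢
        omega
      · intro x hx hnx
        rw [Finset.mem_range] at hx hnx
        rw [hbig ((x : ℤ) - D) (by omega) (by omega), zero_mul]
    have e3 : ∑ t ∈ Finset.range d, f ((t : ℤ) - D) * ω d ^ (-((t : ℤ) * (k.val : ℤ)))
        = (d : ℂ) * (ω d ^ (-((D:ℤ) * (k.val : ℤ))) * β k) := by
      have := inv_core d (fun j => ω d ^ (-((D:ℤ) * (j.val : ℤ))) * β j) k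
      rw [← this]
      refine Finset.sum_congr rfl fun t _ => ?_
      rw [mul_comm]
      congr 1
      refine Finset.sum_congr rfl fun j _ => ?_
      rw [← mul_assoc, ← zpow_add₀ (omega_ne_zero d)]
      congr 2
      ring
    rw [e1, e2, e3]; ring
  set nb : ZMod d := ((d / 2 : ℕ) : ZMod d) with hnb
  have hnbv : nb.val = d / 2 := by
    rw [hnb, ZMod.val_natCast]; exact Nat.mod_eq_of_lt (by omega)
  have hneg : ∀ k : ZMod d, -(ω d ^ (-(k.val : ℤ))) = ω d ^ (-(((k + nb).val : ℕ) : ℤ)) := by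
    intro k
    have hval : (k + nb).val = (k.val + d / 2) % d := by rw [ZMod.val_add, hnbv]
    have hdvd : (d : ℤ) ∣ (-(((k + nb).val : ℕ) : ℤ)) - (-((k.val : ℤ) + ((d / 2 : ℕ) : ℤ))) := by
      rw [hval]
      have hdvd0 : (d : ℤ) ∣ ((k.val + d / 2 : ℕ) : ℤ) - (((k.val + d / 2) % d : ℕ) : ℤ) :=
        (Nat.mod_modEq (k.val + d / 2) d).dvd
      have heq : (-((((k.val + d / 2) % d : ℕ)) : ℤ)) - (-((k.val : ℤ) + ((d / 2 : ℕ) : ℤ)))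
          = ((k.val + d / 2 : ℕ) : ℤ) - (((k.val + d / 2) % d : ℕ) : ℤ) := by push_cast; ring
      rw [heq]; exact hdvd0
    rw [omega_zpow_congr d hdvd, neg_add, zpow_add₀ (omega_ne_zero d),
      zpow_neg (ω d) (((d / 2 : ℕ) : ℤ)), omega_half d heven (by omega)]
    simp [inv_neg]
  set R : Polynomial ℂ := P * P.comp (-Polynomial.X) with hRdef
  have hRdeg : R.natDegree ≤ 4 * D := by
    refine le_trans Polynomial.natDegree_mul_le ?_
    have h2 : (P.comp (-Polynomial.X)).natDegree ≤ 2 * D := by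
      refine le_trans Polynomial.natDegree_comp_le ?_
      have hx : (-Polynomial.X : Polynomial ℂ).natDegree = 1 := by
        rw [Polynomial.natDegree_neg, Polynomial.natDegree_X]
      rw [hx, mul_one]; exact hdegP
    omega
  have hRzero : ∀ k : ZMod d, R.eval (ω d ^ (-(k.val : ℤ))) = 0 := by
    intro k
    rw [hRdef, Polynomial.eval_mul, Polynomial.eval_comp, Polynomial.eval_neg, Polynomial.eval_X,
      hneg k, heval k, heval (k + nb)]
    have : (ω d ^ (-((D : ℤ) * (k.val : ℤ))) * ((d : ℂ) * β k)) *
        (ω d ^ (-((D : ℤ) * (((k + nb).val : ℕ) : ℤ))) * ((d : ℂ) * β (k + nb)))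
        = (ω d ^ (-((D : ℤ) * (k.val : ℤ))) * ω d ^ (-((D : ℤ) * (((k + nb).val : ℕ) : ℤ)))
            * (d : ℂ) * (d : ℂ)) * (β k * β (k + nb)) := by ring
    rw [this, hβprod k, mul_zero]
  have hinj : Function.Injective (fun k : ZMod d => ω d ^ (-(k.val : ℤ))) := by
    intro a b hab
    simp only at hab
    have hdvd := omega_zpow_inj d hab
    have ha := ZMod.val_lt a; have hb := ZMod.val_lt b
    have h0 : (-(a.val : ℤ)) - (-(b.val : ℤ)) = -((a.val : ℤ) - (b.val : ℤ)) := by ring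
    rw [h0] at hdvd
    have := Int.eq_zero_of_abs_lt_dvd ((dvd_neg).mp hdvd) (by rw [abs_lt]; omega)
    have : a.val = b.val := by omega
    exact ZMod.val_injective d this
  have hR0 : R = 0 := by
    refine Polynomial.eq_zero_of_natDegree_lt_card_of_eval_eq_zero R hinj hRzero ?_
    rw [ZMod.card d]
    omega
  have hP0 : P = 0 := by
    rcases mul_eq_zero.mp (hRdef ▸ hR0) with h | h
    · exact h
    · refine Polynomial.funext fun z => ?_
      have : P.eval z = (P.comp (-Polynomial.X)).eval (-z) := by
        rw [Polynomial.eval_comp, Polynomial.eval_neg, Polynomial.eval_X, neg_neg]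
      rw [this, h]; simp
  rw [hP0, Polynomial.coeff_zero] at hcoeff
  exact zero_ne_one hcoeff

lemma fourier_inv_zero (d : ℕ) [NeZero d] (γ : ZMod d → ℂ)
    (h : ∀ s : ℕ, s < d → ∑ k : ZMod d, ω d ^ ((s : ℤ) * (k.val : ℤ)) * γ k = 0) :
    ∀ k, γ k = 0 := by
  intro k
  have h0 := inv_core d γ k
  have h1 : ∑ t ∈ Finset.range d, ω d ^ (-((t : ℤ) * (k.val : ℤ))) *
      ∑ j : ZMod d, ω d ^ ((t : ℤ) * (j.val : ℤ)) * γ j = 0 := by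
    refine Finset.sum_eq_zero fun t ht => ?_
    rw [h t (Finset.mem_range.mp ht), mul_zero]
  rw [h1] at h0
  have hd : (d : ℂ) ≠ 0 := Nat.cast_ne_zero.mpr (NeZero.ne d)
  exact (mul_eq_zero.mp h0.symm).resolve_left hd

noncomputable def bet (d : ℕ) [NeZero d] (α : ZMod d → ℂ) : ZMod d → ℂ :=
  fun k => (starRingEnd ℂ) (α k) * α k

noncomputable def gam (d : ℕ) [NeZero d] (α : ZMod d → ℂ) : ZMod d → ℂ :=
  fun k => (starRingEnd ℂ) (α k) * α (k - ((d / 2 : ℕ) : ZMod d))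

/-- (Lemma 5 of the paper.) For even `d ≥ 6` and `m ≥ 1`, the set
`S^d(m) = {(0,i)}_{i=0}^{m-1} ∪ {(d/2, im-1)}_{i=1}^{⌈(d+2)/(2m)⌉}
  ∪ {(0, d/2 - im)}_{i=0}^{⌈⌈(d+1)/4⌉/m⌉ - 1}`
of generalized Bell states is 1-LOCC indistinguishable: there is no unit vector
`α ∈ ℂ^d` for which the vectors `X^a Z^b α`, `(a,b) ∈ S^d(m)`, are pairwise
orthogonal. -/
theorem stmt_17 (d : ℕ) [NeZero d] (hd : 6 ≤ d) (heven : Even d)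
    (m : ℕ) (hm : 1 ≤ m) :
    ∃ S : Finset (ZMod d × ZMod d),
      S = (Finset.range m).image (fun i : ℕ => ((0 : ZMod d), (i : ZMod d))) ∪
          (Finset.Icc 1 ⌈((d : ℚ) + 2) / (2 * (m : ℚ))⌉₊).image
            (fun i : ℕ => ((((d / 2 : ℕ) : ZMod d)), ((i * m - 1 : ℕ) : ZMod d))) ∪
          (Finset.range ⌈(⌈((d : ℚ) + 1) / 4⌉₊ : ℚ) / (m : ℚ)⌉₊).image
            (fun i : ℕ => ((0 : ZMod d),
              (((((d / 2 : ℕ) : ℤ) - (i : ℤ) * (m : ℤ)) : ℤ) : ZMod d))) ∧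
      ¬ ∃ α : ZMod d → ℂ, ip d α α = 1 ∧
        ∀ p ∈ S, ∀ q ∈ S, p ≠ q → ip d (pU d p.1 p.2 α) (pU d q.1 q.2 α) = 0 := by
  classical
  have hd0 : d ≠ 0 := NeZero.ne d
  have hd2 : d % 2 = 0 := Nat.even_iff.mp heven
  have hm0 : 0 < m := hm
  refine ⟨_, rfl, ?_⟩
  rintro ⟨α, hα1, horth⟩
  -- numeric facts
  have hK1 : d + 1 ≤ 4 * ⌈((d : ℚ) + 1) / 4⌉₊ := by
    have h := Nat.le_ceil (((d : ℚ) + 1) / 4)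
    rw [div_le_iff₀ (by norm_num : (0:ℚ) < 4)] at h
    have h2 : ((d : ℚ)) + 1 ≤ ((4 * ⌈((d : ℚ) + 1) / 4⌉₊ : ℕ) : ℚ) := by push_cast; linarith
    exact_mod_cast h2
  have hmQ : (0 : ℚ) < m := by exact_mod_cast hm0
  have hN3m : ⌈((d : ℚ) + 1) / 4⌉₊ ≤ ⌈(⌈((d : ℚ) + 1) / 4⌉₊ : ℚ) / (m : ℚ)⌉₊ * m := by
    have h := Nat.le_ceil ((⌈((d : ℚ) + 1) / 4⌉₊ : ℚ) / (m : ℚ))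
    rw [div_le_iff₀ hmQ] at h
    have h2 : ((⌈((d : ℚ) + 1) / 4⌉₊ : ℕ) : ℚ)
        ≤ ((⌈(⌈((d : ℚ) + 1) / 4⌉₊ : ℚ) / (m : ℚ)⌉₊ * m : ℕ) : ℚ) := by push_cast; linarith
    exact_mod_cast h2
  have hN2m : d + 2 ≤ 2 * (⌈((d : ℚ) + 2) / (2 * (m : ℚ))⌉₊ * m) := by
    have h := Nat.le_ceil (((d : ℚ) + 2) / (2 * (m : ℚ)))
    rw [div_le_iff₀ (by linarith : (0:ℚ) < 2 * (m:ℚ))] at h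
    have h2 : ((d : ℚ)) + 2 ≤ ((2 * (⌈((d : ℚ) + 2) / (2 * (m : ℚ))⌉₊ * m) : ℕ) : ℚ) := by
      push_cast; linarith
    exact_mod_cast h2
  -- ZMod facts
  have hnbne : ((d / 2 : ℕ) : ZMod d) ≠ (0 : ZMod d) := by
    rw [Ne, ZMod.natCast_eq_zero_iff]
    intro hdvd
    have := Nat.le_of_dvd (by omega) hdvd
    omega
  have hnbnb : ((d / 2 : ℕ) : ZMod d) + ((d / 2 : ℕ) : ZMod d) = 0 := by
    rw [← Nat.cast_add]
    have h2 : d / 2 + d / 2 = d := by omega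
    rw [h2, ZMod.natCast_self]
  have hsub : ∀ k : ZMod d, k - ((d / 2 : ℕ) : ZMod d) = k + ((d / 2 : ℕ) : ZMod d) := by
    intro k
    rw [sub_eq_add_neg]
    congr 1
    rw [neg_eq_iff_add_eq_zero]
    exact hnbnb
  have hnbval : (((d / 2 : ℕ) : ZMod d)).val = d / 2 := by
    rw [ZMod.val_natCast]
    exact Nat.mod_eq_of_lt (by omega)
  have hmodnat : ∀ a : ℕ, (((a % d : ℕ)) : ℤ) ≡ ((a : ℕ) : ℤ) [ZMOD (d : ℤ)] := by
    intro a
    have : (((a % d : ℕ)) : ℤ) = ((a : ℕ) : ℤ) % (d : ℤ) := by push_cast; ring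
    rw [this]
    exact Int.emod_emod_of_dvd _ dvd_rfl
  have hβdef : ∀ k : ZMod d, bet d α k = (starRingEnd ℂ) (α k) * α k := fun _ => rfl
  have hγdef : ∀ k : ZMod d,
      gam d α k = (starRingEnd ℂ) (α k) * α (k - ((d / 2 : ℕ) : ZMod d)) := fun _ => rfl
  -- inner product computations
  have hip0 : ∀ b c : ZMod d, ip d (pU d 0 b α) (pU d 0 c α)
      = ∑ k : ZMod d, ω d ^ (((c.val : ℤ) - (b.val : ℤ)) * (k.val : ℤ)) * bet d α k := by
    intro b c
    unfold ip pU
    refine Finset.sum_congr rfl fun k _ => ?_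
    simp only [sub_zero]
    rw [map_mul, ← zpow_natCast (ω d) (b.val * k.val), omega_conj,
      ← zpow_natCast (ω d) (c.val * k.val)]
    have h3 : ω d ^ (-((b.val * k.val : ℕ) : ℤ)) * (starRingEnd ℂ) (α k) *
        (ω d ^ ((c.val * k.val : ℕ) : ℤ) * α k)
        = (ω d ^ (-((b.val * k.val : ℕ) : ℤ)) * ω d ^ ((c.val * k.val : ℕ) : ℤ)) * bet d α k := by
      rw [hβdef]; ring
    rw [h3, ← zpow_add₀ (omega_ne_zero d)]
    congr 1
    push_cast
    ring
  have hipx : ∀ b c : ZMod d, ip d (pU d 0 b α) (pU d ((d / 2 : ℕ) : ZMod d) c α)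
      = ∑ k : ZMod d, ω d ^ ((c.val : ℤ) * (((k - ((d / 2 : ℕ) : ZMod d)).val : ℕ) : ℤ)
          - (b.val : ℤ) * (k.val : ℤ)) * gam d α k := by
    intro b c
    unfold ip pU
    refine Finset.sum_congr rfl fun k _ => ?_
    simp only [sub_zero]
    rw [map_mul, ← zpow_natCast (ω d) (b.val * k.val), omega_conj,
      ← zpow_natCast (ω d) (c.val * (k - ((d / 2 : ℕ) : ZMod d)).val)]
    have h3 : ω d ^ (-((b.val * k.val : ℕ) : ℤ)) * (starRingEnd ℂ) (α k) *
        (ω d ^ ((c.val * (k - ((d / 2 : ℕ) : ZMod d)).val : ℕ) : ℤ)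
          * α (k - ((d / 2 : ℕ) : ZMod d)))
        = (ω d ^ (-((b.val * k.val : ℕ) : ℤ))
            * ω d ^ ((c.val * (k - ((d / 2 : ℕ) : ZMod d)).val : ℕ) : ℤ)) * gam d α k := by
      rw [hγdef]; ring
    rw [h3, ← zpow_add₀ (omega_ne_zero d)]
    congr 1
    push_cast
    ring
  -- Step B : cross conditions give γ ≡ 0
  have hglow : ∀ s : ℕ, s ≤ d / 2 →
      ∑ k : ZMod d, ω d ^ ((s : ℤ) * (k.val : ℤ)) * gam d α k = 0 := by
    intro s hs
    have hdm := Nat.div_add_mod s m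
    have hmod : s % m < m := Nat.mod_lt s hm0
    have him : (s / m + 1) * m = m * (s / m) + m := by ring
    have hsj : (s / m + 1) * m - 1 = s + (m - 1 - s % m) := by omega
    have hjm : m - 1 - s % m < m := by omega
    have hiN2 : s / m + 1 ≤ ⌈((d : ℚ) + 2) / (2 * (m : ℚ))⌉₊ := by
      have hlt : s / m < ⌈((d : ℚ) + 2) / (2 * (m : ℚ))⌉₊ := by
        rw [Nat.div_lt_iff_lt_mul hm0]
        omega
      omega
    have hmemp : (((0 : ZMod d), ((m - 1 - s % m : ℕ) : ZMod d)) : ZMod d × ZMod d)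
        ∈ (Finset.range m).image (fun i : ℕ => ((0 : ZMod d), (i : ZMod d))) :=
      Finset.mem_image.mpr ⟨m - 1 - s % m, Finset.mem_range.mpr hjm, rfl⟩
    have hmemq : ((((d / 2 : ℕ) : ZMod d), (((s / m + 1) * m - 1 : ℕ) : ZMod d)) : ZMod d × ZMod d)
        ∈ (Finset.Icc 1 ⌈((d : ℚ) + 2) / (2 * (m : ℚ))⌉₊).image
            (fun i : ℕ => ((((d / 2 : ℕ) : ZMod d)), ((i * m - 1 : ℕ) : ZMod d))) :=
      Finset.mem_image.mpr ⟨s / m + 1, Finset.mem_Icc.mpr ⟨Nat.le_add_left 1 (s / m), hiN2⟩, rfl⟩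
    have hne : (((0 : ZMod d), ((m - 1 - s % m : ℕ) : ZMod d)) : ZMod d × ZMod d)
        ≠ (((d / 2 : ℕ) : ZMod d), (((s / m + 1) * m - 1 : ℕ) : ZMod d)) := by
      intro h
      exact hnbne (congrArg Prod.fst h).symm
    have h0' := horth _ (Finset.mem_union_left _ (Finset.mem_union_left _ hmemp))
      _ (Finset.mem_union_left _ (Finset.mem_union_right _ hmemq)) hne
    have h0 : ip d (pU d 0 ((m - 1 - s % m : ℕ) : ZMod d) α)
        (pU d ((d / 2 : ℕ) : ZMod d) (((s / m + 1) * m - 1 : ℕ) : ZMod d) α) = 0 := h0'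
    rw [hipx] at h0
    have hcv : (((((s / m + 1) * m - 1 : ℕ) : ZMod d)).val : ℤ)
        ≡ ((s : ℤ) + ((m - 1 - s % m : ℕ) : ℤ)) [ZMOD (d : ℤ)] := by
      rw [ZMod.val_natCast, hsj]
      have := hmodnat (s + (m - 1 - s % m))
      rw [show (((s + (m - 1 - s % m) : ℕ)) : ℤ) = (s : ℤ) + ((m - 1 - s % m : ℕ) : ℤ) by
        push_cast; ring] at this
      exact this
    have hbv : ((((m - 1 - s % m : ℕ) : ZMod d)).val : ℤ)
        ≡ ((m - 1 - s % m : ℕ) : ℤ) [ZMOD (d : ℤ)] := by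
      rw [ZMod.val_natCast]
      exact hmodnat _
    have htrans : ∑ k : ZMod d, ω d ^ (((((s / m + 1) * m - 1 : ℕ) : ZMod d).val : ℤ)
          * (((k - ((d / 2 : ℕ) : ZMod d)).val : ℕ) : ℤ)
          - (((m - 1 - s % m : ℕ) : ZMod d).val : ℤ) * (k.val : ℤ)) * gam d α k
        = ω d ^ ((((s + (m - 1 - s % m)) * (d / 2) : ℕ) : ℤ))
          * ∑ k : ZMod d, ω d ^ ((s : ℤ) * (k.val : ℤ)) * gam d α k := by
      rw [Finset.mul_sum]
      refine Finset.sum_congr rfl fun k _ => ?_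
      have hkv : (((k - ((d / 2 : ℕ) : ZMod d)).val : ℕ) : ℤ)
          ≡ ((k.val : ℤ) + ((d / 2 : ℕ) : ℤ)) [ZMOD (d : ℤ)] := by
        rw [hsub k, ZMod.val_add, hnbval]
        have := hmodnat (k.val + d / 2)
        rw [show (((k.val + d / 2 : ℕ)) : ℤ) = (k.val : ℤ) + ((d / 2 : ℕ) : ℤ) by
          push_cast; ring] at this
        exact this
      have hE : ((((((s / m + 1) * m - 1 : ℕ) : ZMod d)).val : ℤ)
            * (((k - ((d / 2 : ℕ) : ZMod d)).val : ℕ) : ℤ)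
            - ((((m - 1 - s % m : ℕ) : ZMod d)).val : ℤ) * (k.val : ℤ))
          ≡ ((((s + (m - 1 - s % m)) * (d / 2) : ℕ) : ℤ) + (s : ℤ) * (k.val : ℤ))
            [ZMOD (d : ℤ)] := by
        have h5 := (hcv.mul hkv).sub (hbv.mul (Int.ModEq.refl (k.val : ℤ)))
        have heq : ((s : ℤ) + ((m - 1 - s % m : ℕ) : ℤ)) * ((k.val : ℤ) + ((d / 2 : ℕ) : ℤ))
            - ((m - 1 - s % m : ℕ) : ℤ) * (k.val : ℤ)
            = (((s + (m - 1 - s % m)) * (d / 2) : ℕ) : ℤ) + (s : ℤ) * (k.val : ℤ) := by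
          push_cast; ring
        rw [heq] at h5
        exact h5
      rw [omega_zpow_congr d hE.symm.dvd, zpow_add₀ (omega_ne_zero d), mul_assoc]
    rw [htrans] at h0
    exact (mul_eq_zero.mp h0).resolve_left (zpow_ne_zero _ (omega_ne_zero d))
  have hγshift : ∀ k : ZMod d,
      (starRingEnd ℂ) (gam d α (k + ((d / 2 : ℕ) : ZMod d))) = gam d α k := by
    intro k
    rw [hγdef, hγdef, add_sub_cancel_right, map_mul, Complex.conj_conj, hsub k]
    ring
  have hgall : ∀ s : ℕ, s < d →
      ∑ k : ZMod d, ω d ^ ((s : ℤ) * (k.val : ℤ)) * gam d α k = 0 := by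
    intro s hslt
    by_cases hs : s ≤ d / 2
    · exact hglow s hs
    · push_neg at hs
      have hds : d - s ≤ d / 2 := by omega
      have h1 : ∑ k : ZMod d, ω d ^ ((s : ℤ) * (k.val : ℤ)) * gam d α k
          = ω d ^ ((s : ℤ) * ((d / 2 : ℕ) : ℤ)) * (starRingEnd ℂ)
              (∑ k : ZMod d, ω d ^ (((d - s : ℕ) : ℤ) * (k.val : ℤ)) * gam d α k) := by
        rw [map_sum, Finset.mul_sum]
        rw [← Equiv.sum_comp (Equiv.addRight ((d / 2 : ℕ) : ZMod d))
            (fun k : ZMod d => ω d ^ ((s : ℤ) * (k.val : ℤ)) * gam d α k)]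
        refine Finset.sum_congr rfl fun k _ => ?_
        simp only [Equiv.coe_addRight]
        rw [map_mul, omega_conj]
        have hcg : (starRingEnd ℂ) (gam d α k) = gam d α (k + ((d / 2 : ℕ) : ZMod d)) := by
          rw [← hγshift k, Complex.conj_conj]
        rw [hcg]
        have hkv : (((k + ((d / 2 : ℕ) : ZMod d)).val : ℕ) : ℤ)
            ≡ ((k.val : ℤ) + ((d / 2 : ℕ) : ℤ)) [ZMOD (d : ℤ)] := by
          rw [ZMod.val_add, hnbval]
          have := hmodnat (k.val + d / 2)
          rw [show (((k.val + d / 2 : ℕ)) : ℤ) = (k.val : ℤ) + ((d / 2 : ℕ) : ℤ) by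
            push_cast; ring] at this
          exact this
        have hE : ((s : ℤ) * (((k + ((d / 2 : ℕ) : ZMod d)).val : ℕ) : ℤ))
            ≡ ((s : ℤ) * ((d / 2 : ℕ) : ℤ) + -(((d - s : ℕ) : ℤ) * (k.val : ℤ)))
              [ZMOD (d : ℤ)] := by
          have h5 := (Int.ModEq.refl (s : ℤ)).mul hkv
          have h6 : ((s : ℤ) * ((k.val : ℤ) + ((d / 2 : ℕ) : ℤ)))
              ≡ ((s : ℤ) * ((d / 2 : ℕ) : ℤ) + -(((d - s : ℕ) : ℤ) * (k.val : ℤ)))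
                [ZMOD (d : ℤ)] := by
            rw [Int.ModEq]
            apply Int.ModEq.symm
            rw [Int.modEq_iff_dvd]
            refine ⟨(k.val : ℤ), ?_⟩
            rw [Nat.cast_sub (le_of_lt hslt)]
            ring
          exact h5.trans h6
        rw [omega_zpow_congr d hE.symm.dvd, zpow_add₀ (omega_ne_zero d), mul_assoc]
      rw [h1, hglow (d - s) hds, map_zero, mul_zero]
  have hγ0 : ∀ k, gam d α k = 0 := fourier_inv_zero d (gam d α) hgall
  -- β facts
  have hβconj : ∀ k : ZMod d, (starRingEnd ℂ) (bet d α k) = bet d α k := by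
    intro k
    rw [hβdef, map_mul, Complex.conj_conj]
    ring
  have hβsum : ∑ k : ZMod d, bet d α k = 1 := hα1
  have hβprod : ∀ k : ZMod d, bet d α k * bet d α (k + ((d / 2 : ℕ) : ZMod d)) = 0 := by
    intro k
    have h0 := hγ0 (k + ((d / 2 : ℕ) : ZMod d))
    rw [hγdef, add_sub_cancel_right] at h0
    rcases mul_eq_zero.mp h0 with h | h
    · have hz : α (k + ((d / 2 : ℕ) : ZMod d)) = 0 := by
        simpa using congrArg (starRingEnd ℂ) h
      rw [hβdef, hβdef, hz]
      ring
    · rw [hβdef, hβdef, h]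
      ring
  -- Step A : f vanishes on the needed band
  have hfA : ∀ r : ℕ, (d / 2 - ⌈((d : ℚ) + 1) / 4⌉₊) + 1 ≤ r → r ≤ d / 2 →
      ∑ k : ZMod d, ω d ^ ((r : ℤ) * (k.val : ℤ)) * bet d α k = 0 := by
    intro r h1 h2
    have hdm := Nat.div_add_mod (d / 2 - r) m
    have hmod : (d / 2 - r) % m < m := Nat.mod_lt _ hm0
    have hslt : d / 2 - r < ⌈(⌈((d : ℚ) + 1) / 4⌉₊ : ℚ) / (m : ℚ)⌉₊ * m := by
      generalize hA : (⌈((d : ℚ) + 1) / 4⌉₊ : ℕ) = A at h1 hN3m ⊢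
      generalize hB : (⌈(A : ℚ) / (m : ℚ)⌉₊ : ℕ) = B at hN3m ⊢
      omega
    have hiN3 : (d / 2 - r) / m < ⌈(⌈((d : ℚ) + 1) / 4⌉₊ : ℚ) / (m : ℚ)⌉₊ := by
      rw [Nat.div_lt_iff_lt_mul hm0]
      exact hslt
    have hint : ((d / 2 : ℕ) : ℤ) - (((d / 2 - r) / m : ℕ) : ℤ) * ((m : ℕ) : ℤ)
        - (((d / 2 - r) % m : ℕ) : ℤ) = ((r : ℕ) : ℤ) := by
      have h9 : ((m : ℕ) : ℤ) * (((d / 2 - r) / m : ℕ) : ℤ) + (((d / 2 - r) % m : ℕ) : ℤ)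
          = ((d / 2 - r : ℕ) : ℤ) := by exact_mod_cast congrArg (Nat.cast (R := ℤ)) hdm
      have h10 : ((d / 2 - r : ℕ) : ℤ) = ((d / 2 : ℕ) : ℤ) - ((r : ℕ) : ℤ) := by
        rw [Nat.cast_sub h2]
      linarith
    have hmemp : (((0 : ZMod d), (((d / 2 - r) % m : ℕ) : ZMod d)) : ZMod d × ZMod d)
        ∈ (Finset.range m).image (fun i : ℕ => ((0 : ZMod d), (i : ZMod d))) :=
      Finset.mem_image.mpr ⟨(d / 2 - r) % m, Finset.mem_range.mpr hmod, rfl⟩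
    have hmemq : (((0 : ZMod d),
          ((((d / 2 : ℕ) : ℤ) - (((d / 2 - r) / m : ℕ) : ℤ) * (m : ℤ) : ℤ) : ZMod d)) :
            ZMod d × ZMod d)
        ∈ (Finset.range ⌈(⌈((d : ℚ) + 1) / 4⌉₊ : ℚ) / (m : ℚ)⌉₊).image
            (fun i : ℕ => ((0 : ZMod d),
              (((((d / 2 : ℕ) : ℤ) - (i : ℤ) * (m : ℤ)) : ℤ) : ZMod d))) :=
      Finset.mem_image.mpr ⟨(d / 2 - r) / m, Finset.mem_range.mpr hiN3, rfl⟩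
    have hne : (((0 : ZMod d), (((d / 2 - r) % m : ℕ) : ZMod d)) : ZMod d × ZMod d)
        ≠ ((0 : ZMod d),
            ((((d / 2 : ℕ) : ℤ) - (((d / 2 - r) / m : ℕ) : ℤ) * (m : ℤ) : ℤ) : ZMod d)) := by
      intro h
      have h2nd := congrArg Prod.snd h
      simp only [] at h2nd
      have hcast : (((((d / 2 - r) % m : ℕ) : ℤ)) : ZMod d)
          = ((((d / 2 : ℕ) : ℤ) - (((d / 2 - r) / m : ℕ) : ℤ) * (m : ℤ) : ℤ) : ZMod d) := by
        rw [Int.cast_natCast]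
        exact h2nd
      have hdvd := (ZMod.intCast_eq_intCast_iff_dvd_sub _ _ d).mp hcast
      rw [hint] at hdvd
      have hr0 : (0 : ℤ) < (r : ℤ) := by
        have h4 : 1 ≤ r := by omega
        exact_mod_cast h4
      have h5 := Int.le_of_dvd hr0 hdvd
      have hrd : (r : ℤ) ≤ ((d / 2 : ℕ) : ℤ) := by exact_mod_cast h2
      omega
    have h0' := horth _ (Finset.mem_union_left _ (Finset.mem_union_left _ hmemp))
      _ (Finset.mem_union_right _ hmemq) hne
    have h0 : ip d (pU d 0 (((d / 2 - r) % m : ℕ) : ZMod d) α)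
        (pU d 0 ((((d / 2 : ℕ) : ℤ) - (((d / 2 - r) / m : ℕ) : ℤ) * (m : ℤ) : ℤ) : ZMod d) α)
        = 0 := h0'
    rw [hip0] at h0
    have hcv : ((((((d / 2 : ℕ) : ℤ) - (((d / 2 - r) / m : ℕ) : ℤ) * (m : ℤ) : ℤ) : ZMod d)).val : ℤ)
        ≡ (((d / 2 : ℕ) : ℤ) - (((d / 2 - r) / m : ℕ) : ℤ) * (m : ℤ)) [ZMOD (d : ℤ)] := by
      rw [ZMod.val_intCast]
      exact Int.emod_emod_of_dvd _ dvd_rfl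
    have hbv : (((((d / 2 - r) % m : ℕ) : ZMod d)).val : ℤ)
        ≡ (((d / 2 - r) % m : ℕ) : ℤ) [ZMOD (d : ℤ)] := by
      rw [ZMod.val_natCast]
      exact hmodnat _
    refine Eq.trans (Finset.sum_congr rfl fun k _ => ?_) h0
    have hE := (hcv.sub hbv).mul_right (k.val : ℤ)
    rw [hint] at hE
    exact congrArg (· * bet d α k) (omega_zpow_congr d hE.dvd)
  exact core d hd hd2 (bet d α) hβconj hβsum hβprod
    (d / 2 - ⌈((d : ℚ) + 1) / 4⌉₊)
    (by generalize hA : (⌈((d : ℚ) + 1) / 4⌉₊ : ℕ) = A at hK1 ⊢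
        omega) hfA
end
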